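/- arXiv:2506.21373 — 2 statements merged into one kernel-verified Lean document; each statement's English description precedes it below -/
import Mathlib

section
/- Let φ : ℝ^d → ℝ be bounded by c₀ and Lipschitz continuous with constant K, and let κ > 0. Then any minimizer b of v ↦ φ(x+v) + |v|²/(2κ²) satisfies |b| ≤ C·κ^{3/2}, where C depends only on c₀ and K (one may take C = √(2K·√(2c₀))). -/
/-!
Comparing the minimizer `b` with `v = 0` and using `|φ| ≤ c₀` gives `‖b‖²/(2κ²) ≤ 2c₀`, i.e.
`‖b‖ ≤ 2√c₀ κ`. Comparing it with the shortened displacement `(1 - t) b` and using the Lipschitz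
bound gives `t(2 - t)‖b‖² ≤ 2Kκ² t‖b‖`; dividing by `t` and letting `t → 0⁺` yields `‖b‖ ≤ Kκ²`.
Multiplying the two bounds, `‖b‖² ≤ 2K√c₀ κ³ ≤ 2K√(2c₀) κ³`.
-/

open Filter Topology Set

namespace ProximalDisplacement

variable {E : Type*} [SeminormedAddCommGroup E] {φ : E → ℝ} {κ : ℝ} {x b : E}

theorem norm_le_two_mul_sqrt_mul {c₀ : ℝ} (hφb : ∀ y, |φ y| ≤ c₀) (hκ : 0 < κ)
    (hb : ∀ v, φ (x + b) + ‖b‖ ^ 2 / (2 * κ ^ 2) ≤ φ (x + v) + ‖v‖ ^ 2 / (2 * κ ^ 2)) :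
    ‖b‖ ≤ 2 * √c₀ * κ := by
  have hc₀ : 0 ≤ c₀ := (abs_nonneg _).trans (hφb x)
  have hosc : φ x - φ (x + b) ≤ 2 * c₀ := by
    linarith [(abs_le.mp (hφb x)).2, (abs_le.mp (hφb (x + b))).1]
  have hcompare : ‖b‖ ^ 2 / (2 * κ ^ 2) ≤ 2 * c₀ := by
    have h₀ : φ (x + b) + ‖b‖ ^ 2 / (2 * κ ^ 2) ≤ φ x := by simpa using hb 0
    linarith
  have hsq : ‖b‖ ^ 2 ≤ (2 * √c₀ * κ) ^ 2 := by
    rw [div_le_iff₀ (by positivity)] at hcompare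
    rw [mul_pow, mul_pow, Real.sq_sqrt hc₀]
    linarith
  exact (pow_le_pow_iff_left₀ (norm_nonneg b) (by positivity) two_ne_zero).mp hsq

theorem two_sub_mul_norm_sq_le [NormedSpace ℝ E] {K : NNReal} (hK : LipschitzWith K φ) (hκ : 0 < κ)
    (hb : ∀ v, φ (x + b) + ‖b‖ ^ 2 / (2 * κ ^ 2) ≤ φ (x + v) + ‖v‖ ^ 2 / (2 * κ ^ 2))
    {t : ℝ} (ht : t ∈ Ioc 0 1) :
    (2 - t) * ‖b‖ ^ 2 ≤ 2 * K * κ ^ 2 * ‖b‖ := by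
  obtain ⟨ht₀, ht₁⟩ := ht
  have hnorm : ‖(1 - t) • b‖ = (1 - t) * ‖b‖ := by
    rw [norm_smul, Real.norm_of_nonneg (by linarith)]
  have hlip : φ (x + (1 - t) • b) - φ (x + b) ≤ K * (t * ‖b‖) := by
    have hdist : dist (x + (1 - t) • b) (x + b) = t * ‖b‖ := by
      rw [dist_eq_norm, show x + (1 - t) • b - (x + b) = (-t) • b by module, norm_smul,
        Real.norm_of_nonpos (by linarith), neg_neg]
    calc φ (x + (1 - t) • b) - φ (x + b) ≤ dist (φ (x + (1 - t) • b)) (φ (x + b)) :=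
          (le_abs_self _).trans (Real.dist_eq _ _).ge
      _ ≤ K * (t * ‖b‖) := hdist ▸ hK.dist_le_mul _ _
  have hgain : t * ((2 - t) * ‖b‖ ^ 2) / (2 * κ ^ 2) ≤ t * (K * ‖b‖) := by
    have := hb ((1 - t) • b)
    rw [hnorm] at this
    calc t * ((2 - t) * ‖b‖ ^ 2) / (2 * κ ^ 2)
        = ‖b‖ ^ 2 / (2 * κ ^ 2) - ((1 - t) * ‖b‖) ^ 2 / (2 * κ ^ 2) := by ring
      _ ≤ K * (t * ‖b‖) := by linarith
      _ = t * (K * ‖b‖) := by ring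
  rw [mul_div_assoc, mul_le_mul_iff_right₀ ht₀, div_le_iff₀ (by positivity)] at hgain
  linarith

theorem norm_le_mul_sq [NormedSpace ℝ E] {K : NNReal} (hK : LipschitzWith K φ) (hκ : 0 < κ)
    (hb : ∀ v, φ (x + b) + ‖b‖ ^ 2 / (2 * κ ^ 2) ≤ φ (x + v) + ‖v‖ ^ 2 / (2 * κ ^ 2)) :
    ‖b‖ ≤ K * κ ^ 2 := by
  have hlim : Tendsto (fun t : ℝ ↦ (2 - t) * ‖b‖ ^ 2) (𝓝[>] 0) (𝓝 ((2 - 0) * ‖b‖ ^ 2)) :=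
    ((continuous_const.sub continuous_id).mul continuous_const).continuousAt.tendsto.mono_left
      nhdsWithin_le_nhds
  have hsq : (2 - 0) * ‖b‖ ^ 2 ≤ 2 * K * κ ^ 2 * ‖b‖ :=
    le_of_tendsto hlim <| eventually_of_mem (Ioc_mem_nhdsGT one_pos)
      fun _ ht ↦ two_sub_mul_norm_sq_le hK hκ hb ht
  rcases (norm_nonneg b).eq_or_lt with hb₀ | hb₀
  · rw [← hb₀]
    positivity
  · nlinarith

end ProximalDisplacement

open ProximalDisplacement in
theorem stmt1 (d : ℕ) (φ : EuclideanSpace ℝ (Fin d) → ℝ) (c₀ : ℝ) (K : NNReal) (κ : ℝ)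
    (hφb : ∀ x, |φ x| ≤ c₀) (hK : LipschitzWith K φ) (hκ : 0 < κ)
    (x b : EuclideanSpace ℝ (Fin d))
    (hb : ∀ v, φ (x + b) + ‖b‖ ^ 2 / (2 * κ ^ 2) ≤ φ (x + v) + ‖v‖ ^ 2 / (2 * κ ^ 2)) :
    ‖b‖ ≤ Real.sqrt (2 * K * Real.sqrt (2 * c₀)) * κ ^ ((3 : ℝ) / 2) := by
  have hc₀ : 0 ≤ c₀ := (abs_nonneg _).trans (hφb x)
  have hsq : ‖b‖ ^ 2 ≤ 2 * K * √(2 * c₀) * κ ^ 3 :=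
    calc ‖b‖ ^ 2 = ‖b‖ * ‖b‖ := sq _
      _ ≤ (K * κ ^ 2) * (2 * √c₀ * κ) :=
        mul_le_mul (norm_le_mul_sq hK hκ hb) (norm_le_two_mul_sqrt_mul hφb hκ hb)
          (norm_nonneg b) (by positivity)
      _ = 2 * K * √c₀ * κ ^ 3 := by ring
      _ ≤ 2 * K * √(2 * c₀) * κ ^ 3 := by gcongr; linarith
  have hbound_sq : (√(2 * K * √(2 * c₀)) * κ ^ ((3 : ℝ) / 2)) ^ 2 = 2 * K * √(2 * c₀) * κ ^ 3 := by
    rw [mul_pow, Real.sq_sqrt (by positivity), ← Real.rpow_natCast (κ ^ _),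
      ← Real.rpow_mul hκ.le]
    norm_num
  rw [← hbound_sq] at hsq
  exact (pow_le_pow_iff_left₀ (norm_nonneg b) (by positivity) two_ne_zero).mp hsq
end

section
/- Let (x_N, v_N) for N ∈ ℕ be controlled processes on [0,N] (x_N absolutely continuous with derivative v_N) with uniform velocity bound |v_N(t)| ≤ C₃, taking values in a compact configuration space (e.g. trajectories in ℝ^d considered modulo ℤ^d, or assume all x_N lie in a fixed compact set). Define occupation measures μ_N on configuration × velocity space by ∫ ψ dμ_N = (1/N)∫₀^N ψ(x_N(t), v_N(t)) dt. Then there exists a subsequence μ_{N_k} converging narrowly to a probability measure μ supported on (compact set) × {|v| ≤ C₃}, and μ is holonomic: for every C¹ function φ on the configuration space, ∫ ⟨∇φ(x), v⟩ dμ(x,v) = 0. -/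
/-!
The occupation measures are probability measures carried by the compact set
`K × closedBall 0 C₃`, so Prokhorov's theorem yields a narrowly convergent subsequence whose limit
is carried by the same set; there every continuous function agrees with a bounded one, so its
integrals converge as well. For holonomy, `x_N` is `C₃`-Lipschitz, hence `ψ ∘ x_N` is Lipschitz
and thus absolutely continuous with derivative `⟪∇ψ (x_N t), v_N t⟫` almost everywhere. The
fundamental theorem of calculus then gives `∫ ⟪∇ψ, v⟫ dμ_N = (ψ (x_N N) - ψ (x_N 0)) / N`, which
is `O(1 / N)` since `ψ` is bounded.
-/

open MeasureTheory Set Filter Topology TopologicalSpace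

theorem IsCompact.exists_boundedContinuousFunction_eqOn {X : Type*} [TopologicalSpace X]
    {K : Set X} (hK : IsCompact K) {f : X → ℝ} (hf : Continuous f) :
    ∃ g : BoundedContinuousFunction X ℝ, EqOn g f K := by
  obtain ⟨C, hC⟩ := hK.exists_bound_of_continuousOn hf.continuousOn
  set C' := max C 0
  refine ⟨.ofNormedAddCommGroup (fun x => max (-C') (min C' (f x))) (by fun_prop) C'
    fun x => ?_, fun x hx => ?_⟩
  · have hC' : 0 ≤ C' := le_max_right C 0
    rw [Real.norm_eq_abs, abs_le]
    exact ⟨le_max_left _ _, max_le (by linarith) (min_le_left _ _)⟩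
  · have hfx := abs_le.1 ((Real.norm_eq_abs _).symm.trans_le ((hC x hx).trans (le_max_left C 0)))
    simp only [BoundedContinuousFunction.coe_ofNormedAddCommGroup]
    rw [min_eq_right hfx.2, max_eq_right hfx.1]

namespace MeasureTheory.ProbabilityMeasure

variable {E : Type*} [TopologicalSpace E] [MeasurableSpace E] {K : Set E}

theorem tendsto_integral_of_compl_eq_zero [OpensMeasurableSpace E] {ι : Type*} {l : Filter ι}
    (hK : IsCompact K) {ν : ι → ProbabilityMeasure E} {P : ProbabilityMeasure E}
    (hνP : Tendsto ν l (𝓝 P)) (hν : ∀ i, (ν i : Measure E) Kᶜ = 0)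
    (hP : (P : Measure E) Kᶜ = 0) {f : E → ℝ} (hf : Continuous f) :
    Tendsto (fun i => ∫ z, f z ∂(ν i : Measure E)) l (𝓝 (∫ z, f z ∂(P : Measure E))) := by
  obtain ⟨g, hgf⟩ := hK.exists_boundedContinuousFunction_eqOn hf
  have integral_eq : ∀ m : Measure E, m Kᶜ = 0 → ∫ z, f z ∂m = ∫ z, g z ∂m := fun m hm =>
    integral_congr_ae <| (ae_iff.2 hm).mono fun z hz => (hgf hz).symm
  simp only [integral_eq _ (hν _), integral_eq _ hP]
  exact ProbabilityMeasure.tendsto_iff_forall_integral_tendsto.1 hνP g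

theorem exists_subseq_tendsto_of_compl_eq_zero [MetrizableSpace E] [SeparableSpace E]
    [BorelSpace E] (hK : IsCompact K) (ν : ℕ → ProbabilityMeasure E)
    (hν : ∀ n, (ν n : Measure E) Kᶜ = 0) :
    ∃ φ : ℕ → ℕ, StrictMono φ ∧ ∃ P : ProbabilityMeasure E, (P : Measure E) Kᶜ = 0 ∧
      Tendsto (ν ∘ φ) atTop (𝓝 P) := by
  -- Prokhorov's theorem for the constant sequences of compact sets `K` and of bounds `0`.
  have hcompact : IsCompact {P : ProbabilityMeasure E | ∀ _ : ℕ, P Kᶜ ≤ 0} :=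
    isCompact_setOfPred_probabilityMeasure_mass_eq_compl_isCompact_le tendsto_const_nhds
      (fun _ => hK) (Or.inr monotone_const)
  have hmem : ∀ (P : ProbabilityMeasure E),
      P ∈ {P : ProbabilityMeasure E | ∀ _ : ℕ, P Kᶜ ≤ 0} ↔ (P : Measure E) Kᶜ = 0 := by
    intro P
    rw [← ennreal_coeFn_eq_coeFn_toMeasure, ENNReal.coe_eq_zero]
    exact ⟨fun h => nonpos_iff_eq_zero.1 (h 0), fun h _ => h.le⟩
  obtain ⟨P, hP, φ, hφ, hlim⟩ := hcompact.tendsto_subseq fun n => (hmem _).2 (hν n)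
  exact ⟨φ, hφ, P, (hmem P).1 hP, hlim⟩

end MeasureTheory.ProbabilityMeasure

section OccupationMeasure

variable {X : Type*} [MeasurableSpace X] {γ : ℝ → X} {T : ℝ}

noncomputable def occupationMeasure (γ : ℝ → X) (T : ℝ) : Measure X :=
  (ENNReal.ofReal T)⁻¹ • (volume.restrict (Icc 0 T)).map γ

theorem isProbabilityMeasure_occupationMeasure (hγ : Measurable γ) (hT : 0 < T) :
    IsProbabilityMeasure (occupationMeasure γ T) := by
  constructor
  rw [occupationMeasure, Measure.smul_apply, Measure.map_apply hγ MeasurableSet.univ,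
    preimage_univ, Measure.restrict_apply_univ, Real.volume_Icc, sub_zero, smul_eq_mul,
    ENNReal.inv_mul_cancel (by simpa using hT) ENNReal.ofReal_ne_top]

theorem occupationMeasure_compl_eq_zero {s : Set X} (hγ : Measurable γ) (hs : MeasurableSet s)
    (hγs : MapsTo γ (Icc 0 T) s) : occupationMeasure γ T sᶜ = 0 := by
  rw [occupationMeasure, Measure.smul_apply, Measure.map_apply hγ hs.compl,
    Measure.restrict_apply (hγ hs.compl), preimage_compl,
    (disjoint_compl_left_iff_subset.2 hγs.subset_preimage).inter_eq, measure_empty, smul_zero]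

theorem integral_occupationMeasure {F : Type*} [NormedAddCommGroup F] [NormedSpace ℝ F]
    {f : X → F} (hγ : Measurable γ) (hf : StronglyMeasurable f) (hT : 0 ≤ T) :
    ∫ z, f z ∂occupationMeasure γ T = T⁻¹ • ∫ t in Icc 0 T, f (γ t) := by
  rw [occupationMeasure, integral_smul_measure,
    integral_map hγ.aemeasurable hf.aestronglyMeasurable,
    ENNReal.toReal_inv, ENNReal.toReal_ofReal hT]

end OccupationMeasure

section Holonomic

variable {E : Type*} [NormedAddCommGroup E] [InnerProductSpace ℝ E] {x v : ℝ → E} {T C : ℝ}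

theorem lipschitzOnWith_of_eq_add_integral (hx : ∀ t ∈ Icc 0 T, x t = x 0 + ∫ u in 0..t, v u)
    (hv : IntegrableOn v (Icc 0 T)) (hvC : ∀ t ∈ Icc 0 T, ‖v t‖ ≤ C) :
    LipschitzOnWith (Real.toNNReal C) x (Icc 0 T) := by
  have hvi : ∀ a ∈ Icc 0 T, IntervalIntegrable v volume 0 a := fun a ha =>
    (hv.mono_set (uIcc_of_le ha.1 ▸ Icc_subset_Icc_right ha.2)).intervalIntegrable
  refine LipschitzOnWith.of_dist_le_mul fun t ht s hs => ?_
  rw [dist_eq_norm, hx t ht, hx s hs, add_sub_add_left_eq_sub,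
    intervalIntegral.integral_interval_sub_left (hvi t ht) (hvi s hs), Real.dist_eq]
  exact intervalIntegral.norm_integral_le_of_norm_le_const fun u hu =>
    (hvC u (uIcc_subset_Icc hs ht (uIoc_subset_uIcc hu))).trans (Real.le_coe_toNNReal C)

variable [CompleteSpace E]

theorem ae_hasDerivAt_of_eq_add_integral (hT : 0 ≤ T)
    (hx : ∀ t ∈ Icc 0 T, x t = x 0 + ∫ u in 0..t, v u) (hv : IntegrableOn v (Icc 0 T)) :
    ∀ᵐ t, t ∈ Ioo 0 T → HasDerivAt x (v t) t := by
  have hvi : IntervalIntegrable v volume 0 T := (uIcc_of_le hT ▸ hv).intervalIntegrable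
  filter_upwards [hvi.ae_hasDerivAt_integral] with t ht htT
  have htT' : t ∈ uIcc 0 T := uIcc_of_le hT ▸ Ioo_subset_Icc_self htT
  exact ((ht htT' 0 left_mem_uIcc).const_add (x 0)).congr_of_eventuallyEq <|
    eventually_of_mem (Ioo_mem_nhds htT.1 htT.2) fun s hs => hx s (Ioo_subset_Icc_self hs)

variable {ψ : E → ℝ} {g : E → E}

theorem contDiff_one_of_hasGradientAt (hψ : ∀ y, HasGradientAt ψ (g y) y) (hg : Continuous g) :
    ContDiff ℝ 1 ψ :=
  contDiff_one_iff_hasFDerivAt.2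
    ⟨fun y => InnerProductSpace.toDual ℝ E (g y),
      (InnerProductSpace.toDual ℝ E).continuous.comp hg, hψ⟩

theorem integral_inner_gradient_eq_sub (hψ : ∀ y, HasGradientAt ψ (g y) y) (hg : Continuous g)
    (hT : 0 ≤ T) (hx : ∀ t ∈ Icc 0 T, x t = x 0 + ∫ u in 0..t, v u)
    (hv : IntegrableOn v (Icc 0 T)) (hvC : ∀ t ∈ Icc 0 T, ‖v t‖ ≤ C) :
    ∫ t in 0..T, inner ℝ (g (x t)) (v t) = ψ (x T) - ψ (x 0) := by
  have hxL := lipschitzOnWith_of_eq_add_integral hx hv hvC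
  obtain ⟨L, hψL⟩ := (contDiff_one_of_hasGradientAt hψ hg).locallyLipschitz.locallyLipschitzOn
    |>.exists_lipschitzOnWith_of_compact (isCompact_Icc.image_of_continuousOn hxL.continuousOn)
  have hAC : AbsolutelyContinuousOnInterval (ψ ∘ x) 0 T := by
    refine LipschitzOnWith.absolutelyContinuousOnInterval (K := L * Real.toNNReal C) ?_
    rw [uIcc_of_le hT]
    exact hψL.comp hxL (mapsTo_image x _)
  rw [← Function.comp_apply (f := ψ), ← Function.comp_apply (f := ψ) (x := 0),
    ← hAC.integral_deriv_eq_sub]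
  refine intervalIntegral.integral_congr_ae ?_
  filter_upwards [ae_hasDerivAt_of_eq_add_integral hT hx hv, Measure.ae_ne volume T]
    with t hderiv htT ht
  rw [uIoc_of_le hT] at ht
  have hxt := hderiv ⟨ht.1, lt_of_le_of_ne ht.2 htT⟩
  exact ((hasGradientAt_iff_hasFDerivAt.1 (hψ (x t))).comp_hasDerivAt t hxt).deriv.symm

theorem integral_inner_gradient_occupationMeasure [MeasurableSpace E] [BorelSpace E]
    [SecondCountableTopology E] (hψ : ∀ y, HasGradientAt ψ (g y) y) (hg : Continuous g)
    (hT : 0 ≤ T) (hxv : Measurable fun t => (x t, v t))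
    (hx : ∀ t ∈ Icc 0 T, x t = x 0 + ∫ u in 0..t, v u)
    (hv : IntegrableOn v (Icc 0 T)) (hvC : ∀ t ∈ Icc 0 T, ‖v t‖ ≤ C) :
    ∫ z, inner ℝ (g z.1) z.2 ∂occupationMeasure (fun t => (x t, v t)) T
      = T⁻¹ * (ψ (x T) - ψ (x 0)) := by
  have hcont : Continuous fun z : E × E => inner ℝ (g z.1) z.2 := by fun_prop
  rw [integral_occupationMeasure hxv hcont.stronglyMeasurable hT, integral_Icc_eq_integral_Ioc,
    ← intervalIntegral.integral_of_le hT, integral_inner_gradient_eq_sub hψ hg hT hx hv hvC,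
    smul_eq_mul]

end Holonomic

theorem stmt15_general (d : ℕ) (Kset : Set (EuclideanSpace ℝ (Fin d))) (hKc : IsCompact Kset)
    (C₃ : ℝ)
    (x v : ℕ → ℝ → EuclideanSpace ℝ (Fin d))
    (hmeas : ∀ N, Measurable (fun t => (x N t, v N t)))
    (hvb : ∀ N : ℕ, ∀ t ∈ Icc (0 : ℝ) N, ‖v N t‖ ≤ C₃)
    (hxK : ∀ N : ℕ, ∀ t ∈ Icc (0 : ℝ) N, x N t ∈ Kset)
    (hx : ∀ N : ℕ, ∀ t ∈ Icc (0 : ℝ) N, x N t = x N 0 + ∫ u in (0 : ℝ)..t, v N u)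
    (hvint : ∀ N : ℕ, IntegrableOn (v N) (Icc (0 : ℝ) N))
    (μ : ℕ → Measure (EuclideanSpace ℝ (Fin d) × EuclideanSpace ℝ (Fin d)))
    (hμ : ∀ N : ℕ, μ N = (N : ENNReal)⁻¹ •
      Measure.map (fun t => (x N t, v N t)) (volume.restrict (Icc (0 : ℝ) N))) :
    ∃ n : ℕ → ℕ, StrictMono n ∧ (∀ k, 1 ≤ n k) ∧
      ∃ μlim : Measure (EuclideanSpace ℝ (Fin d) × EuclideanSpace ℝ (Fin d)),
        IsProbabilityMeasure μlim ∧
        μlim ({z | z.1 ∈ Kset ∧ ‖z.2‖ ≤ C₃}ᶜ) = 0 ∧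
        (∀ f : EuclideanSpace ℝ (Fin d) × EuclideanSpace ℝ (Fin d) → ℝ,
          Continuous f → (∃ M, ∀ z, |f z| ≤ M) →
          Tendsto (fun k => ∫ z, f z ∂(μ (n k))) atTop (nhds (∫ z, f z ∂μlim))) ∧
        (∀ (ψ : EuclideanSpace ℝ (Fin d) → ℝ)
            (gψ : EuclideanSpace ℝ (Fin d) → EuclideanSpace ℝ (Fin d)),
          (∀ y, HasGradientAt ψ (gψ y) y) → Continuous gψ → (∃ M, ∀ y, |ψ y| ≤ M) →
          (∫ z, (inner ℝ (gψ z.1) z.2 : ℝ) ∂μlim) = 0) := by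
  have hocc : ∀ N : ℕ, μ N = occupationMeasure (fun t => (x N t, v N t)) N := fun N => by
    rw [hμ, occupationMeasure, ENNReal.ofReal_natCast]
  set K := {z : EuclideanSpace ℝ (Fin d) × EuclideanSpace ℝ (Fin d) | z.1 ∈ Kset ∧ ‖z.2‖ ≤ C₃}
  have hK : IsCompact K := by
    have hKprod : K = Kset ×ˢ Metric.closedBall 0 C₃ := by
      ext z
      simp [K]
    exact hKprod ▸ hKc.prod (isCompact_closedBall 0 C₃)
  have hμK : ∀ N, μ N Kᶜ = 0 := fun N => by
    rw [hocc]
    exact occupationMeasure_compl_eq_zero (hmeas N) hK.isClosed.measurableSet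
      fun t ht => ⟨hxK N t ht, hvb N t ht⟩
  let ν : ℕ → ProbabilityMeasure (EuclideanSpace ℝ (Fin d) × EuclideanSpace ℝ (Fin d)) :=
    fun k => ⟨μ (k + 1), hocc (k + 1) ▸
      isProbabilityMeasure_occupationMeasure (hmeas _) (by positivity)⟩
  obtain ⟨φ, hφ, P, hPK, hνP⟩ :=
    ProbabilityMeasure.exists_subseq_tendsto_of_compl_eq_zero hK ν fun k => hμK (k + 1)
  have hlim : ∀ f : EuclideanSpace ℝ (Fin d) × EuclideanSpace ℝ (Fin d) → ℝ, Continuous f →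
      Tendsto (fun k => ∫ z, f z ∂(μ (φ k + 1))) atTop (𝓝 (∫ z, f z ∂(P : Measure _))) :=
    fun f hf => ProbabilityMeasure.tendsto_integral_of_compl_eq_zero hK hνP
      (fun k => hμK (φ k + 1)) hPK hf
  refine ⟨fun k => φ k + 1, hφ.add_const 1, fun k => Nat.le_add_left 1 (φ k), P, inferInstance,
    hPK, fun f hf _ => hlim f hf, ?_⟩
  rintro ψ g hψ hg ⟨M, hM⟩
  have hholonomic : Tendsto (fun N : ℕ => ∫ z, inner ℝ (g z.1) z.2 ∂μ N) atTop (𝓝 0) := by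
    refine squeeze_zero_norm (fun N => ?_) (tendsto_const_div_atTop_nhds_zero_nat (2 * M))
    rw [hocc, integral_inner_gradient_occupationMeasure hψ hg N.cast_nonneg (hmeas N) (hx N)
      (hvint N) (hvb N), norm_mul, norm_inv, Real.norm_natCast, Real.norm_eq_abs, inv_mul_eq_div]
    gcongr
    exact (abs_sub _ _).trans (by linarith [hM (x N N), hM (x N 0)])
  exact tendsto_nhds_unique (hlim _ (by fun_prop))
    (hholonomic.comp (hφ.add_const 1).tendsto_atTop)

theorem stmt15 (d : ℕ) (Kset : Set (EuclideanSpace ℝ (Fin d))) (hKc : IsCompact Kset)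
    (C₃ : ℝ) (hC₃ : 0 ≤ C₃)
    (x v : ℕ → ℝ → EuclideanSpace ℝ (Fin d))
    (hmeas : ∀ N, Measurable (fun t => (x N t, v N t)))
    (hvb : ∀ N : ℕ, ∀ t ∈ Icc (0 : ℝ) N, ‖v N t‖ ≤ C₃)
    (hxK : ∀ N : ℕ, ∀ t ∈ Icc (0 : ℝ) N, x N t ∈ Kset)
    (hx : ∀ N : ℕ, ∀ t ∈ Icc (0 : ℝ) N, x N t = x N 0 + ∫ u in (0 : ℝ)..t, v N u)
    (hvint : ∀ N : ℕ, IntegrableOn (v N) (Icc (0 : ℝ) N))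
    (μ : ℕ → Measure (EuclideanSpace ℝ (Fin d) × EuclideanSpace ℝ (Fin d)))
    (hμ : ∀ N : ℕ, μ N = (N : ENNReal)⁻¹ •
      Measure.map (fun t => (x N t, v N t)) (volume.restrict (Icc (0 : ℝ) N))) :
    ∃ n : ℕ → ℕ, StrictMono n ∧ (∀ k, 1 ≤ n k) ∧
      ∃ μlim : Measure (EuclideanSpace ℝ (Fin d) × EuclideanSpace ℝ (Fin d)),
        IsProbabilityMeasure μlim ∧
        μlim ({z | z.1 ∈ Kset ∧ ‖z.2‖ ≤ C₃}ᶜ) = 0 ∧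
        (∀ f : EuclideanSpace ℝ (Fin d) × EuclideanSpace ℝ (Fin d) → ℝ,
          Continuous f → (∃ M, ∀ z, |f z| ≤ M) →
          Tendsto (fun k => ∫ z, f z ∂(μ (n k))) atTop (nhds (∫ z, f z ∂μlim))) ∧
        (∀ (ψ : EuclideanSpace ℝ (Fin d) → ℝ)
            (gψ : EuclideanSpace ℝ (Fin d) → EuclideanSpace ℝ (Fin d)),
          (∀ y, HasGradientAt ψ (gψ y) y) → Continuous gψ → (∃ M, ∀ y, |ψ y| ≤ M) →
          (∫ z, (inner ℝ (gψ z.1) z.2 : ℝ) ∂μlim) = 0) :=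
  stmt15_general d Kset hKc C₃ x v hmeas hvb hxK hx hvint μ hμ
end
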